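/- The quartic/linear interpolation kernel S⁵_{4/1} with parameters a₀₁ > -1, a₀₂, a₀₃ is C¹ continuous on ℝ, satisfies the partition of unity property Σ_{i∈ℤ} S⁵_{4/1}(t - i) = 1 for all t, and its derivative at t = 1 equals -(4 + 3a₀₁ + 2a₀₂ + a₀₃)/(1 + a₀₁). -/

import Mathlib

noncomputable def S45 (a1 a2 a3 t : ℝ) : ℝ :=
  if |t| < 1 then
    (1 - |t|) * (1 + (1 + a1) * |t| + (1 + a1 + a2) * |t| ^ 2 +
      (1 + a1 + a2 + a3) * |t| ^ 3) / (1 + a1 * |t|)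
  else if |t| < 2 then
    (1 - |t|) * (2 - |t|) ^ 2 *
      (5 + 6 * a1 + 3 * a2 + 2 * a3 - (1 + 3 * a1 + a2 + a3) * |t|) /
      (1 + 2 * a1 - a1 * |t|)
  else 0

open Set Filter

namespace S45P

variable (a1 a2 a3 : ℝ)

noncomputable def E (x : ℝ) : ℝ :=
  (2*a2) + (3*a3 + a1*a2)*x + (-4 - 4*a3 - 4*a2 - 4*a1 + 2*a1*a3)*x^2
    + (-3*a1 - 3*a1*a3 - 3*a1*a2 - 3*a1^2)*x^3

noncomputable def f1 (x : ℝ) : ℝ :=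
  (1 + a1*x + a2*x^2 + a3*x^3 + (-1 - a3 - a2 - a1)*x^4) / (1 + a1*x)

noncomputable def N2 (x : ℝ) : ℝ :=
  (20 + 8*a3 + 12*a2 + 24*a1) + (-44 - 20*a3 - 28*a2 - 60*a1)*x
    + (33 + 18*a3 + 23*a2 + 54*a1)*x^2 + (-10 - 7*a3 - 8*a2 - 21*a1)*x^3
    + (1 + a3 + a2 + 3*a1)*x^4

noncomputable def N2d (x : ℝ) : ℝ :=
  (-44 - 20*a3 - 28*a2 - 60*a1) + (66 + 36*a3 + 46*a2 + 108*a1)*x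
    + (-30 - 21*a3 - 24*a2 - 63*a1)*x^2 + (4 + 4*a3 + 4*a2 + 12*a1)*x^3

noncomputable def f2 (x : ℝ) : ℝ := N2 a1 a2 a3 x / (1 + 2*a1 - a1*x)

noncomputable def k (x : ℝ) : ℝ :=
  if x < 1 then E a1 a2 a3 x / (1 + a1*x)^2
  else if x < 2 then
    (N2d a1 a2 a3 x * (1 + 2*a1 - a1*x) + a1 * N2 a1 a2 a3 x) / (x * (1 + 2*a1 - a1*x)^2)
  else 0

noncomputable def g (t : ℝ) : ℝ := t * k a1 a2 a3 |t|

lemma S45_eq1 {t : ℝ} (h : |t| < 1) : S45 a1 a2 a3 t = f1 a1 a2 a3 |t| := by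
  simp only [S45, if_pos h, f1]
  congr 1
  ring

lemma S45_eq2 {t : ℝ} (h1 : 1 ≤ |t|) (h2 : |t| < 2) : S45 a1 a2 a3 t = f2 a1 a2 a3 |t| := by
  simp only [S45, if_neg (not_lt.mpr h1), if_pos h2, f2, N2]
  congr 1
  ring

lemma S45_eq0 {t : ℝ} (h : 2 ≤ |t|) : S45 a1 a2 a3 t = 0 := by
  simp only [S45, if_neg (not_lt.mpr (by linarith : (1:ℝ) ≤ |t|)), if_neg (not_lt.mpr h)]

lemma S45_neg (t : ℝ) : S45 a1 a2 a3 (-t) = S45 a1 a2 a3 t := by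
  simp only [S45, abs_neg]

lemma D1_pos (ha1 : -1 < a1) {x : ℝ} (h0 : 0 ≤ x) (h1 : x ≤ 1) : 0 < 1 + a1 * x := by
  nlinarith [mul_nonneg h0 (by linarith : (0:ℝ) ≤ 1 + a1)]

lemma D2_pos (ha1 : -1 < a1) {x : ℝ} (h1 : 1 ≤ x) (h2 : x ≤ 2) : 0 < 1 + 2*a1 - a1 * x := by
  nlinarith [mul_nonneg (by linarith : (0:ℝ) ≤ 2 - x) (by linarith : (0:ℝ) ≤ 1 + a1)]

lemma hasDerivAt_poly4 (c0 c1 c2 c3 c4 x : ℝ) :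
    HasDerivAt (fun t : ℝ => c0 + c1*t + c2*t^2 + c3*t^3 + c4*t^4)
      (c1 + 2*c2*x + 3*c3*x^2 + 4*c4*x^3) x := by
  have h := ((((hasDerivAt_id' (x := x)).const_mul c1).const_add c0).add
      ((hasDerivAt_pow 2 x).const_mul c2)).add ((hasDerivAt_pow 3 x).const_mul c3)
      |>.add ((hasDerivAt_pow 4 x).const_mul c4)
  refine h.congr_deriv ?_
  norm_num
  ring

lemma hasDerivAt_f1 (x : ℝ) (hx : 1 + a1 * x ≠ 0) :
    HasDerivAt (f1 a1 a2 a3) (x * E a1 a2 a3 x / (1 + a1*x)^2) x := by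
  have hN := hasDerivAt_poly4 1 a1 a2 a3 (-1 - a3 - a2 - a1) x
  have hD : HasDerivAt (fun t : ℝ => 1 + a1*t) a1 x := by
    simpa using ((hasDerivAt_id' (x := x)).const_mul a1).const_add 1
  have h := hN.div hD hx
  refine h.congr_deriv ?_
  rw [E]
  field_simp
  ring

lemma hasDerivAt_f2 (x : ℝ) (hx : 1 + 2*a1 - a1 * x ≠ 0) :
    HasDerivAt (f2 a1 a2 a3)
      ((N2d a1 a2 a3 x * (1 + 2*a1 - a1*x) + a1 * N2 a1 a2 a3 x) / (1 + 2*a1 - a1*x)^2) x := by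
  have hN := hasDerivAt_poly4 (20 + 8*a3 + 12*a2 + 24*a1) (-44 - 20*a3 - 28*a2 - 60*a1)
      (33 + 18*a3 + 23*a2 + 54*a1) (-10 - 7*a3 - 8*a2 - 21*a1) (1 + a3 + a2 + 3*a1) x
  have hD : HasDerivAt (fun t : ℝ => 1 + 2*a1 - a1*t) (-a1) x := by
    simpa using ((hasDerivAt_id' (x := x)).const_mul a1).const_sub (1 + 2*a1)
  have h := hN.div hD hx
  refine h.congr_deriv ?_
  rw [N2d, N2]
  field_simp
  ring



lemma glueD {f : ℝ → ℝ} {d c : ℝ} (h1 : HasDerivWithinAt f d (Iic c) c)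
    (h2 : HasDerivWithinAt f d (Ici c) c) : HasDerivAt f d c := by
  have h := h1.union h2
  rwa [Iic_union_Ici, hasDerivWithinAt_univ] at h

lemma glueC {f : ℝ → ℝ} {c : ℝ} (h1 : ContinuousWithinAt f (Iic c) c)
    (h2 : ContinuousWithinAt f (Ici c) c) : ContinuousAt f c := by
  have h := h1.union h2
  rwa [Iic_union_Ici, continuousWithinAt_univ] at h

lemma S45_eqOn1 : ∀ s ∈ Ico (0:ℝ) 1, S45 a1 a2 a3 s = f1 a1 a2 a3 s := by
  intro s hs
  have habs : |s| = s := abs_of_nonneg hs.1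
  rw [S45_eq1 a1 a2 a3 (by rw [habs]; exact hs.2), habs]

lemma S45_eqOn2 : ∀ s ∈ Ico (1:ℝ) 2, S45 a1 a2 a3 s = f2 a1 a2 a3 s := by
  intro s hs
  have habs : |s| = s := abs_of_nonneg (by linarith [hs.1])
  rw [S45_eq2 a1 a2 a3 (by rw [habs]; exact hs.1) (by rw [habs]; exact hs.2), habs]

lemma S45_eqOn0 : ∀ s ∈ Ici (2:ℝ), S45 a1 a2 a3 s = 0 := by
  intro s hs
  exact S45_eq0 a1 a2 a3 (by rw [abs_of_nonneg (by linarith [mem_Ici.mp hs])]; exact hs)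

lemma f1_one : f1 a1 a2 a3 1 = 0 := by
  rw [f1, show (1:ℝ) + a1*1 + a2*1^2 + a3*1^3 + (-1 - a3 - a2 - a1)*1^4 = 0 by ring, zero_div]

lemma f2_one : f2 a1 a2 a3 1 = 0 := by
  rw [f2, N2, show (20 + 8*a3 + 12*a2 + 24*a1) + (-44 - 20*a3 - 28*a2 - 60*a1)*1
    + (33 + 18*a3 + 23*a2 + 54*a1)*1^2 + (-10 - 7*a3 - 8*a2 - 21*a1)*1^3
    + (1 + a3 + a2 + 3*a1)*1^4 = 0 by ring, zero_div]

lemma f2_two : f2 a1 a2 a3 2 = 0 := by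
  rw [f2, N2, show (20 + 8*a3 + 12*a2 + 24*a1) + (-44 - 20*a3 - 28*a2 - 60*a1)*2
    + (33 + 18*a3 + 23*a2 + 54*a1)*2^2 + (-10 - 7*a3 - 8*a2 - 21*a1)*2^3
    + (1 + a3 + a2 + 3*a1)*2^4 = 0 by ring, zero_div]

lemma S45_one : S45 a1 a2 a3 1 = 0 := by
  rw [S45_eq2 a1 a2 a3 (by rw [abs_one]) (by rw [abs_one]; norm_num), abs_one, f2_one]

lemma S45_two : S45 a1 a2 a3 2 = 0 :=
  S45_eq0 a1 a2 a3 (by rw [abs_two])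

lemma S45_zero : S45 a1 a2 a3 0 = 1 := by
  rw [S45_eqOn1 a1 a2 a3 0 (by norm_num), f1]
  norm_num

lemma hasDerivAt_S45_nonneg (ha1 : -1 < a1) (t : ℝ) (ht : 0 ≤ t) :
    HasDerivAt (S45 a1 a2 a3) (g a1 a2 a3 t) t := by
  rcases lt_trichotomy t 1 with h1 | h1 | h1
  · rcases ht.eq_or_lt with h0 | h0
    · -- t = 0
      subst h0
      have hd0 := hasDerivAt_f1 a1 a2 a3 0 (by norm_num)
      have hval : (0:ℝ) * E a1 a2 a3 0 / (1 + a1*0)^2 = 0 := by norm_num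
      rw [hval] at hd0
      have hR : HasDerivWithinAt (S45 a1 a2 a3) 0 (Ici 0) 0 := by
        refine (hd0.hasDerivWithinAt).congr_of_eventuallyEq ?_ ?_
        · filter_upwards [Ico_mem_nhdsGE_of_mem (show (0:ℝ) ∈ Ico 0 1 by norm_num)] with s hs
          exact S45_eqOn1 a1 a2 a3 s hs
        · rw [S45_zero, f1]; norm_num
      have hL : HasDerivWithinAt (S45 a1 a2 a3) 0 (Iic 0) 0 := by
        have hd0' : HasDerivAt (f1 a1 a2 a3) 0 (-0 : ℝ) := by rw [neg_zero]; exact hd0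
        have hcomp := hd0'.comp (0:ℝ) (hasDerivAt_neg (0:ℝ))
        rw [mul_neg_one, neg_zero] at hcomp
        refine hcomp.hasDerivWithinAt.congr_of_eventuallyEq ?_ ?_
        · filter_upwards [Ioc_mem_nhdsLE_of_mem (show (0:ℝ) ∈ Ioc (-1) 0 by norm_num)] with s hs
          have h := S45_eqOn1 a1 a2 a3 (-s) ⟨by linarith [hs.2], by linarith [hs.1]⟩
          rw [S45_neg] at h
          exact h
        · simp only [Function.comp_apply, neg_zero]
          rw [S45_zero, f1]; norm_num
      have hg0 : g a1 a2 a3 0 = 0 := by rw [g, zero_mul]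
      rw [hg0]
      exact glueD hL hR

    · -- 0 < t < 1
      have hd := hasDerivAt_f1 a1 a2 a3 t (ne_of_gt (D1_pos a1 ha1 ht h1.le))
      have hev : S45 a1 a2 a3 =ᶠ[nhds t] f1 a1 a2 a3 := by
        filter_upwards [isOpen_Ioo.mem_nhds (show t ∈ Ioo (0:ℝ) 1 from ⟨h0, h1⟩)] with s hs
        exact S45_eqOn1 a1 a2 a3 s ⟨hs.1.le, hs.2⟩
      have hg : g a1 a2 a3 t = t * E a1 a2 a3 t / (1 + a1*t)^2 := by
        rw [g, abs_of_pos h0, k, if_pos h1, mul_div_assoc]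
      rw [hg]
      exact hd.congr_of_eventuallyEq hev
  · -- t = 1
    subst h1
    have hA : (1:ℝ) + a1 * 1 ≠ 0 := by intro h; rw [mul_one] at h; linarith
    have hB : (1:ℝ) + 2*a1 - a1 * 1 ≠ 0 := by
      have h : (1:ℝ) + 2*a1 - a1*1 = 1 + a1 := by ring
      rw [h]; intro h'; linarith
    have hL : HasDerivWithinAt (S45 a1 a2 a3) (1 * E a1 a2 a3 1 / (1 + a1*1)^2) (Iic 1) 1 := by
      refine (hasDerivAt_f1 a1 a2 a3 1 hA).hasDerivWithinAt.congr_of_eventuallyEq ?_ ?_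
      · filter_upwards [Ioc_mem_nhdsLE_of_mem (show (1:ℝ) ∈ Ioc 0 1 by norm_num)] with s hs
        rcases hs.2.eq_or_lt with rfl | hlt
        · rw [S45_one, f1_one]
        · exact S45_eqOn1 a1 a2 a3 s ⟨hs.1.le, hlt⟩
      · rw [S45_one, f1_one]
    have hR : HasDerivWithinAt (S45 a1 a2 a3)
        ((N2d a1 a2 a3 1 * (1 + 2*a1 - a1*1) + a1 * N2 a1 a2 a3 1) / (1 + 2*a1 - a1*1)^2)
        (Ici 1) 1 := by
      refine (hasDerivAt_f2 a1 a2 a3 1 hB).hasDerivWithinAt.congr_of_eventuallyEq ?_ ?_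
      · filter_upwards [Ico_mem_nhdsGE_of_mem (show (1:ℝ) ∈ Ico 1 2 by norm_num)] with s hs
        exact S45_eqOn2 a1 a2 a3 s hs
      · rw [S45_one, f2_one]
    have e1 : 1 * E a1 a2 a3 1 / (1 + a1*1)^2 = g a1 a2 a3 1 := by
      rw [g, abs_one, k, if_neg (lt_irrefl (1:ℝ)), if_pos (by norm_num : (1:ℝ) < 2), E, N2, N2d]
      field_simp
      ring
    have e2 : (N2d a1 a2 a3 1 * (1 + 2*a1 - a1*1) + a1 * N2 a1 a2 a3 1) / (1 + 2*a1 - a1*1)^2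
        = g a1 a2 a3 1 := by
      rw [g, abs_one, k, if_neg (lt_irrefl (1:ℝ)), if_pos (by norm_num : (1:ℝ) < 2)]
      field_simp
    exact glueD (e1 ▸ hL) (e2 ▸ hR)

  · rcases lt_trichotomy t 2 with h2 | h2 | h2
    · -- 1 < t < 2
      have hd := hasDerivAt_f2 a1 a2 a3 t (ne_of_gt (D2_pos a1 ha1 h1.le h2.le))
      have hev : S45 a1 a2 a3 =ᶠ[nhds t] f2 a1 a2 a3 := by
        filter_upwards [isOpen_Ioo.mem_nhds (show t ∈ Ioo (1:ℝ) 2 from ⟨h1, h2⟩)] with s hs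
        exact S45_eqOn2 a1 a2 a3 s ⟨hs.1.le, hs.2⟩
      have hg : g a1 a2 a3 t =
          (N2d a1 a2 a3 t * (1 + 2*a1 - a1*t) + a1 * N2 a1 a2 a3 t) / (1 + 2*a1 - a1*t)^2 := by
        rw [g, abs_of_pos (by linarith), k, if_neg (not_lt.mpr h1.le), if_pos h2]
        have htne : t ≠ 0 := by linarith
        have hDne : (1 + 2*a1 - a1*t) ≠ 0 := ne_of_gt (D2_pos a1 ha1 h1.le h2.le)
        field_simp
      rw [hg]
      exact hd.congr_of_eventuallyEq hev
    · -- t = 2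
      subst h2
      have hB2 : (1:ℝ) + 2*a1 - a1 * 2 ≠ 0 := by
        have h : (1:ℝ) + 2*a1 - a1*2 = 1 := by ring
        rw [h]; norm_num
      have hL : HasDerivWithinAt (S45 a1 a2 a3)
          ((N2d a1 a2 a3 2 * (1 + 2*a1 - a1*2) + a1 * N2 a1 a2 a3 2) / (1 + 2*a1 - a1*2)^2)
          (Iic 2) 2 := by
        refine (hasDerivAt_f2 a1 a2 a3 2 hB2).hasDerivWithinAt.congr_of_eventuallyEq ?_ ?_
        · filter_upwards [Ioc_mem_nhdsLE_of_mem (show (2:ℝ) ∈ Ioc 1 2 by norm_num)] with s hs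
          rcases hs.2.eq_or_lt with rfl | hlt
          · rw [S45_two, f2_two]
          · exact S45_eqOn2 a1 a2 a3 s ⟨hs.1.le, hlt⟩
        · rw [S45_two, f2_two]
      have hR : HasDerivWithinAt (S45 a1 a2 a3) 0 (Ici 2) 2 := by
        refine (hasDerivAt_const (2:ℝ) (0:ℝ)).hasDerivWithinAt.congr_of_eventuallyEq ?_ ?_
        · filter_upwards [self_mem_nhdsWithin] with s hs
          exact S45_eqOn0 a1 a2 a3 s hs
        · rw [S45_two]
      have e1 : (N2d a1 a2 a3 2 * (1 + 2*a1 - a1*2) + a1 * N2 a1 a2 a3 2) / (1 + 2*a1 - a1*2)^2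
          = g a1 a2 a3 2 := by
        have hz : N2d a1 a2 a3 2 * (1 + 2*a1 - a1*2) + a1 * N2 a1 a2 a3 2 = 0 := by
          rw [N2d, N2]; ring
        rw [hz, zero_div, g, abs_two, k, if_neg (by norm_num : ¬(2:ℝ) < 1),
          if_neg (lt_irrefl (2:ℝ)), mul_zero]
      have e2 : (0:ℝ) = g a1 a2 a3 2 := by
        rw [g, abs_two, k, if_neg (by norm_num : ¬(2:ℝ) < 1), if_neg (lt_irrefl (2:ℝ)), mul_zero]
      exact glueD (e1 ▸ hL) (e2 ▸ hR)

    · -- t > 2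
      have hev : S45 a1 a2 a3 =ᶠ[nhds t] (fun _ => (0:ℝ)) := by
        filter_upwards [isOpen_Ioi.mem_nhds (show t ∈ Ioi (2:ℝ) from h2)] with s hs
        exact S45_eqOn0 a1 a2 a3 s (mem_Ici.mpr (le_of_lt (mem_Ioi.mp hs)))
      have hg : g a1 a2 a3 t = 0 := by
        rw [g, abs_of_pos (by linarith), k, if_neg (by push_neg; linarith),
          if_neg (by push_neg; linarith), mul_zero]
      rw [hg]
      exact (hasDerivAt_const t (0:ℝ)).congr_of_eventuallyEq hev


lemma hasDerivAt_S45 (ha1 : -1 < a1) (t : ℝ) :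
    HasDerivAt (S45 a1 a2 a3) (g a1 a2 a3 t) t := by
  rcases le_or_gt 0 t with ht | ht
  · exact hasDerivAt_S45_nonneg a1 a2 a3 ha1 t ht
  · have h := hasDerivAt_S45_nonneg a1 a2 a3 ha1 (-t) (by linarith)
    have h2 := h.comp t (hasDerivAt_neg t)
    have hfe : S45 a1 a2 a3 ∘ Neg.neg = S45 a1 a2 a3 := funext fun s => S45_neg a1 a2 a3 s
    rw [hfe] at h2
    refine h2.congr_deriv ?_
    rw [g, g, abs_neg]
    ring

/-- Continuity of the candidate derivative inner function `t ↦ k |t|`. -/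
lemma contK_nonneg (ha1 : -1 < a1) (t : ℝ) (ht : 0 ≤ t) :
    ContinuousAt (fun s : ℝ => k a1 a2 a3 |s|) t := by
  have hF1 : ∀ x : ℝ, 0 ≤ x → x ≤ 1 →
      ContinuousAt (fun s : ℝ => E a1 a2 a3 |s| / (1 + a1*|s|)^2) x := by
    intro x hx0 hx1
    apply ContinuousAt.div
    · simp only [E]; fun_prop
    · fun_prop
    · have : 0 < 1 + a1 * |x| := D1_pos a1 ha1 (abs_nonneg x) (by rw [abs_of_nonneg hx0]; exact hx1)
      positivity
  have hF2 : ∀ x : ℝ, 1 ≤ x → x ≤ 2 →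
      ContinuousAt (fun s : ℝ => (N2d a1 a2 a3 |s| * (1 + 2*a1 - a1*|s|) + a1 * N2 a1 a2 a3 |s|)
        / (|s| * (1 + 2*a1 - a1*|s|)^2)) x := by
    intro x hx1 hx2
    apply ContinuousAt.div
    · simp only [N2d, N2]; fun_prop
    · fun_prop
    · have habs : |x| = x := abs_of_nonneg (by linarith)
      have h1 : 0 < 1 + 2*a1 - a1 * |x| := D2_pos a1 ha1 (by rw [habs]; exact hx1) (by rw [habs]; exact hx2)
      have h2 : 0 < |x| := by rw [habs]; linarith
      positivity
  have hk1 : ∀ s : ℝ, |s| < 1 → k a1 a2 a3 |s| = E a1 a2 a3 |s| / (1 + a1*|s|)^2 := by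
    intro s hs; rw [k, if_pos hs]
  have hk2 : ∀ s : ℝ, 1 ≤ |s| → |s| < 2 → k a1 a2 a3 |s| =
      (N2d a1 a2 a3 |s| * (1 + 2*a1 - a1*|s|) + a1 * N2 a1 a2 a3 |s|)
        / (|s| * (1 + 2*a1 - a1*|s|)^2) := by
    intro s hs1 hs2; rw [k, if_neg (not_lt.mpr hs1), if_pos hs2]
  have hk0 : ∀ s : ℝ, 2 ≤ |s| → k a1 a2 a3 |s| = 0 := by
    intro s hs1
    rw [k, if_neg (not_lt.mpr (by linarith)), if_neg (not_lt.mpr hs1)]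
  rcases lt_trichotomy t 1 with h1 | h1 | h1
  · -- 0 ≤ t < 1
    refine (hF1 t ht h1.le).congr ?_
    filter_upwards [isOpen_Ioo.mem_nhds (show t ∈ Ioo (-1:ℝ) 1 from ⟨by linarith, h1⟩)] with s hs
    exact (hk1 s (abs_lt.mpr ⟨hs.1, hs.2⟩)).symm
  · -- t = 1
    subst h1
    apply glueC
    · refine ((hF1 1 zero_le_one le_rfl).continuousWithinAt).congr_of_eventuallyEq ?_ ?_
      · filter_upwards [Ioc_mem_nhdsLE_of_mem (show (1:ℝ) ∈ Ioc (-1) 1 by norm_num)] with s hs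
        rcases hs.2.eq_or_lt with rfl | hlt
        · -- s = 1 : matching identity
          rw [abs_one, k, if_neg (lt_irrefl (1:ℝ)), if_pos (by norm_num : (1:ℝ) < 2)]
          have hA : (1:ℝ) + a1 * 1 ≠ 0 := by intro h; rw [mul_one] at h; linarith
          have hB : (1:ℝ) + 2*a1 - a1 * 1 ≠ 0 := by
            have h : (1:ℝ) + 2*a1 - a1*1 = 1 + a1 := by ring
            rw [h]; intro h'; linarith
          rw [E, N2, N2d]
          field_simp
          ring
        · exact hk1 s (abs_lt.mpr ⟨hs.1, hlt⟩)
      · rw [abs_one, k, if_neg (lt_irrefl (1:ℝ)), if_pos (by norm_num : (1:ℝ) < 2)]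
        have hA : (1:ℝ) + a1 * 1 ≠ 0 := by intro h; rw [mul_one] at h; linarith
        have hB : (1:ℝ) + 2*a1 - a1 * 1 ≠ 0 := by
          have h : (1:ℝ) + 2*a1 - a1*1 = 1 + a1 := by ring
          rw [h]; intro h'; linarith
        rw [E, N2, N2d]
        field_simp
        ring
    · refine ((hF2 1 le_rfl one_le_two).continuousWithinAt).congr_of_eventuallyEq ?_ ?_
      · filter_upwards [Ico_mem_nhdsGE_of_mem (show (1:ℝ) ∈ Ico 1 2 by norm_num)] with s hs
        have habs : |s| = s := abs_of_nonneg (by linarith [hs.1])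
        exact hk2 s (by rw [habs]; exact hs.1) (by rw [habs]; exact hs.2)
      · exact hk2 1 (by rw [abs_one]) (by rw [abs_one]; norm_num)
  · rcases lt_trichotomy t 2 with h2 | h2 | h2
    · -- 1 < t < 2
      refine (hF2 t h1.le h2.le).congr ?_
      filter_upwards [isOpen_Ioo.mem_nhds (show t ∈ Ioo (1:ℝ) 2 from ⟨h1, h2⟩)] with s hs
      have habs : |s| = s := abs_of_nonneg (by linarith [hs.1])
      exact (hk2 s (by rw [habs]; exact hs.1.le) (by rw [habs]; exact hs.2)).symm
    · -- t = 2
      subst h2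
      apply glueC
      · refine ((hF2 2 one_le_two le_rfl).continuousWithinAt).congr_of_eventuallyEq ?_ ?_
        · filter_upwards [Ioc_mem_nhdsLE_of_mem (show (2:ℝ) ∈ Ioc 1 2 by norm_num)] with s hs
          rcases hs.2.eq_or_lt with rfl | hlt
          · rw [abs_two, k, if_neg (by norm_num : ¬(2:ℝ) < 1), if_neg (lt_irrefl (2:ℝ))]
            rw [N2, N2d]
            rw [show ((-44 - 20*a3 - 28*a2 - 60*a1) + (66 + 36*a3 + 46*a2 + 108*a1)*2
              + (-30 - 21*a3 - 24*a2 - 63*a1)*2^2 + (4 + 4*a3 + 4*a2 + 12*a1)*2^3)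
                * (1 + 2*a1 - a1*2)
              + a1 * ((20 + 8*a3 + 12*a2 + 24*a1) + (-44 - 20*a3 - 28*a2 - 60*a1)*2
              + (33 + 18*a3 + 23*a2 + 54*a1)*2^2 + (-10 - 7*a3 - 8*a2 - 21*a1)*2^3
              + (1 + a3 + a2 + 3*a1)*2^4) = 0 from by ring, zero_div]
          · have habs : |s| = s := abs_of_nonneg (by linarith [hs.1])
            exact hk2 s (by rw [habs]; exact hs.1.le) (by rw [habs]; exact hlt)
        · rw [abs_two, k, if_neg (by norm_num : ¬(2:ℝ) < 1), if_neg (lt_irrefl (2:ℝ))]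
          rw [N2, N2d]
          rw [show ((-44 - 20*a3 - 28*a2 - 60*a1) + (66 + 36*a3 + 46*a2 + 108*a1)*2
            + (-30 - 21*a3 - 24*a2 - 63*a1)*2^2 + (4 + 4*a3 + 4*a2 + 12*a1)*2^3)
              * (1 + 2*a1 - a1*2)
            + a1 * ((20 + 8*a3 + 12*a2 + 24*a1) + (-44 - 20*a3 - 28*a2 - 60*a1)*2
            + (33 + 18*a3 + 23*a2 + 54*a1)*2^2 + (-10 - 7*a3 - 8*a2 - 21*a1)*2^3
            + (1 + a3 + a2 + 3*a1)*2^4) = 0 from by ring, zero_div]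
      · refine (continuousWithinAt_const (b := (0:ℝ))).congr_of_eventuallyEq ?_ ?_
        · filter_upwards [self_mem_nhdsWithin] with s hs
          exact hk0 s (by rw [abs_of_nonneg (by linarith [mem_Ici.mp hs] : (0:ℝ) ≤ s)]; exact hs)
        · exact hk0 2 (by rw [abs_two])
    · -- t > 2
      refine (continuousAt_const (y := (0:ℝ))).congr ?_
      filter_upwards [isOpen_Ioi.mem_nhds (show t ∈ Ioi (2:ℝ) from h2)] with s hs
      exact (hk0 s (by rw [abs_of_nonneg (by linarith [mem_Ioi.mp hs] : (0:ℝ) ≤ s)]; linarith [mem_Ioi.mp hs])).symm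

lemma contK (ha1 : -1 < a1) : Continuous (fun s : ℝ => k a1 a2 a3 |s|) := by
  rw [continuous_iff_continuousAt]
  intro t
  rcases le_or_gt 0 t with ht | ht
  · exact contK_nonneg a1 a2 a3 ha1 t ht
  · have h := (contK_nonneg a1 a2 a3 ha1 (-t) (by linarith)).comp
      (continuous_neg.continuousAt (x := t))
    have hfe : ((fun s : ℝ => k a1 a2 a3 |s|) ∘ Neg.neg) = fun s : ℝ => k a1 a2 a3 |s| := by
      funext s
      simp [abs_neg]
    rwa [hfe] at h

lemma cont_g (ha1 : -1 < a1) : Continuous (g a1 a2 a3) := by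
  have : Continuous fun t : ℝ => t * k a1 a2 a3 |t| :=
    continuous_id'.mul (contK a1 a2 a3 ha1)
  exact this


lemma sum4 (ha1 : -1 < a1) (u : ℝ) (h0 : 0 ≤ u) (h1 : u < 1) :
    S45 a1 a2 a3 (u+1) + S45 a1 a2 a3 u + S45 a1 a2 a3 (u-1) + S45 a1 a2 a3 (u-2) = 1 := by
  rcases h0.eq_or_lt with h0' | h0'
  · rw [← h0']
    rw [show (0:ℝ)+1 = 1 by norm_num, show (0:ℝ)-1 = (-1:ℝ) by norm_num,
        show (0:ℝ)-2 = (-2:ℝ) by norm_num, S45_neg a1 a2 a3 1, S45_neg a1 a2 a3 2,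
        S45_one, S45_zero, S45_two]
    norm_num
  · have hd1 : (1:ℝ) + a1*u ≠ 0 := ne_of_gt (D1_pos a1 ha1 h0 h1.le)
    have hd2 : (1:ℝ) + a1*(1-u) ≠ 0 := ne_of_gt (D1_pos a1 ha1 (by linarith) (by linarith))
    have hd3 : (1:ℝ) + 2*a1 - a1*(u+1) ≠ 0 := ne_of_gt (D2_pos a1 ha1 (by linarith) (by linarith))
    have hd4 : (1:ℝ) + 2*a1 - a1*(2-u) ≠ 0 := ne_of_gt (D2_pos a1 ha1 (by linarith) (by linarith))
    have e1 : S45 a1 a2 a3 u = f1 a1 a2 a3 u := S45_eqOn1 a1 a2 a3 u ⟨h0, h1⟩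
    have e2 : S45 a1 a2 a3 (u-1) = f1 a1 a2 a3 (1-u) := by
      have habs : |u-1| = 1-u := by rw [abs_of_neg (by linarith : u-1 < (0:ℝ))]; ring
      rw [S45_eq1 a1 a2 a3 (by rw [habs]; linarith), habs]
    have e3 : S45 a1 a2 a3 (u+1) = f2 a1 a2 a3 (u+1) := by
      have habs : |u+1| = u+1 := abs_of_nonneg (by linarith)
      rw [S45_eq2 a1 a2 a3 (by rw [habs]; linarith) (by rw [habs]; linarith), habs]
    have e4 : S45 a1 a2 a3 (u-2) = f2 a1 a2 a3 (2-u) := by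
      have habs : |u-2| = 2-u := by rw [abs_of_neg (by linarith : u-2 < (0:ℝ))]; ring
      rw [S45_eq2 a1 a2 a3 (by rw [habs]; linarith) (by rw [habs]; linarith), habs]
    rw [e1, e2, e3, e4]
    simp only [f1, f2, N2]
    rw [div_add_div _ _ hd3 hd1, div_add_div _ _ (mul_ne_zero hd3 hd1) hd2,
      div_add_div _ _ (mul_ne_zero (mul_ne_zero hd3 hd1) hd2) hd4, div_eq_one_iff_eq
      (mul_ne_zero (mul_ne_zero (mul_ne_zero hd3 hd1) hd2) hd4)]
    ring

end S45P

theorem S45_properties (a1 a2 a3 : ℝ) (ha1 : -1 < a1) :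
    ContDiff ℝ 1 (S45 a1 a2 a3) ∧
    (∀ t : ℝ, ∑' i : ℤ, S45 a1 a2 a3 (t - i) = 1) ∧
    deriv (S45 a1 a2 a3) 1 = -(4 + 3 * a1 + 2 * a2 + a3) / (1 + a1) := by
  refine ⟨?_, ?_, ?_⟩
  · rw [contDiff_one_iff_deriv]
    refine ⟨fun t => (S45P.hasDerivAt_S45 a1 a2 a3 ha1 t).differentiableAt, ?_⟩
    have hderiv : deriv (S45 a1 a2 a3) = S45P.g a1 a2 a3 :=
      funext fun t => (S45P.hasDerivAt_S45 a1 a2 a3 ha1 t).deriv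
    rw [hderiv]
    exact S45P.cont_g a1 a2 a3 ha1
  · intro t
    have hfloor0 : (0:ℝ) ≤ t - ⌊t⌋ := sub_nonneg.mpr (Int.floor_le t)
    have hfloor1 : t - ⌊t⌋ < 1 := by linarith [Int.lt_floor_add_one t]
    set n := ⌊t⌋ with hn
    have hzero : ∀ i : ℤ, i ∉ ({n-1, n, n+1, n+2} : Finset ℤ) → S45 a1 a2 a3 (t - i) = 0 := by
      intro i hi
      simp only [Finset.mem_insert, Finset.mem_singleton] at hi
      apply S45P.S45_eq0
      rcases (by omega : i ≤ n - 2 ∨ n + 3 ≤ i) with h | h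
      · have hc : (i:ℝ) ≤ (n:ℝ) - 2 := by exact_mod_cast h
        rw [abs_of_nonneg (by linarith)]
        linarith
      · have hc : (n:ℝ) + 3 ≤ (i:ℝ) := by exact_mod_cast h
        rw [abs_of_nonpos (by linarith)]
        linarith
    rw [tsum_eq_sum hzero]
    rw [Finset.sum_insert (by simp only [Finset.mem_insert, Finset.mem_singleton]; omega),
        Finset.sum_insert (by simp only [Finset.mem_insert, Finset.mem_singleton]; omega),
        Finset.sum_insert (by simp only [Finset.mem_singleton]; omega),
        Finset.sum_singleton]
    have key := S45P.sum4 a1 a2 a3 ha1 (t - n) hfloor0 hfloor1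
    push_cast
    rw [show t - ((n:ℝ) - 1) = (t - n) + 1 by ring, show t - ((n:ℝ) + 1) = (t - n) - 1 by ring,
        show t - ((n:ℝ) + 2) = (t - n) - 2 by ring]
    linarith [key]
  · rw [(S45P.hasDerivAt_S45 a1 a2 a3 ha1 1).deriv]
    rw [S45P.g, abs_one, S45P.k, if_neg (lt_irrefl (1:ℝ)),
        if_pos (by norm_num : (1:ℝ) < 2), S45P.N2d, S45P.N2]
    have hA : (1:ℝ) + a1 ≠ 0 := by intro h; linarith
    rw [show (1:ℝ) + 2*a1 - a1*1 = 1 + a1 from by ring]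
    have hb : (1:ℝ) * (1+a1)^2 ≠ 0 := by
      simpa using pow_ne_zero 2 hA
    rw [one_mul, div_eq_div_iff hb hA]
    ring
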